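/- Let S ⊆ ℝⁿ be closed, O ⊆ ℝⁿ nonempty and bounded with closure O̅, x* ∈ S with S ∩ O̅ = {x*}. Suppose there exist δ > 0 and λ̄ ∈ (0,1) such that dist(x,O) ≥ λ̄‖x−x*‖ for all x ∈ S with ‖x−x*‖ < δ. Then there exists λ ∈ (0,1) such that dist(x,O) ≥ λ‖x−x*‖ for all x ∈ S. -/

import Mathlib

/-!
Split `S` into three regions around `x*`. Near `x*` the local bound applies. If `O` lies in the
ball of radius `R` about `x*`, then at distance `≥ 2R` from `x*` the triangle inequality gives
`dist(x, O) ≥ ‖x - x*‖ - R ≥ ‖x - x*‖ / 2`. The remaining annulus of `S` is compact and misses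
`closure O`, so `dist(·, O)` has a positive minimum there, which beats `‖x - x*‖` up to a constant.
-/

open Metric Set

namespace Metric

variable {α : Type*} [PseudoMetricSpace α]

theorem dist_sub_le_infDist_of_subset_closedBall {O : Set α} {x₀ : α} {R : ℝ}
    (hne : O.Nonempty) (hOR : O ⊆ closedBall x₀ R) (x : α) :
    dist x x₀ - R ≤ infDist x O :=
  (le_infDist hne).2 fun y hy => by
    have hyR : dist y x₀ ≤ R := hOR hy
    linarith [dist_triangle x y x₀]

theorem _root_.IsCompact.exists_pos_mul_dist_le_infDist {K O : Set α} (hK : IsCompact K)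
    (hpos : ∀ x ∈ K, 0 < infDist x O) (x₀ : α) :
    ∃ c, 0 < c ∧ ∀ x ∈ K, c * dist x x₀ ≤ infDist x O := by
  obtain ⟨m, hm, hmK⟩ := hK.exists_forall_le' (continuous_infDist_pt O).continuousOn hpos
  obtain ⟨D, hD, hKD⟩ := hK.isBounded.subset_closedBall_lt 0 x₀
  refine ⟨m / D, div_pos hm hD, fun x hx => ?_⟩
  calc m / D * dist x x₀ ≤ m / D * D := by gcongr; exact hKD hx
    _ = m := div_mul_cancel₀ m hD.ne'
    _ ≤ infDist x O := hmK x hx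

end Metric

theorem stmt6_general {n : ℕ} (S O : Set (EuclideanSpace ℝ (Fin n)))
    (xstar : EuclideanSpace ℝ (Fin n))
    (hS : IsClosed S) (hne : O.Nonempty) (hbd : Bornology.IsBounded O)
    (hcap : S ∩ closure O = {xstar})
    (δ lam' : ℝ) (hδ : 0 < δ) (hlam'0 : 0 < lam') (hlam'1 : lam' < 1)
    (hloc : ∀ x ∈ S, ‖x - xstar‖ < δ → lam' * ‖x - xstar‖ ≤ Metric.infDist x O) :
    ∃ lam : ℝ, 0 < lam ∧ lam < 1 ∧
      ∀ x ∈ S, lam * ‖x - xstar‖ ≤ Metric.infDist x O := by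
  obtain ⟨R, hOR⟩ := hbd.subset_closedBall xstar
  set K := (S ∩ closedBall xstar (2 * R)) \ ball xstar δ
  have hK : IsCompact K := ((isCompact_closedBall xstar (2 * R)).inter_left hS).diff isOpen_ball
  have hKpos : ∀ x ∈ K, 0 < infDist x O := fun x ⟨⟨hxS, _⟩, hxδ⟩ => by
    refine (infDist_pos_iff_notMem_closure hne).1 fun hxO => hxδ ?_
    have hx : x ∈ ({xstar} : Set _) := hcap ▸ ⟨hxS, hxO⟩
    simpa [mem_singleton_iff.1 hx] using hδ
  obtain ⟨c, hc0, hc⟩ := hK.exists_pos_mul_dist_le_infDist hKpos xstar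
  set lam := min lam' (min (1 / 2) c)
  have hlam_near : lam ≤ lam' := min_le_left _ _
  have hlam_far : lam ≤ 1 / 2 := (min_le_right _ _).trans (min_le_left _ _)
  have hlam_mid : lam ≤ c := (min_le_right _ _).trans (min_le_right _ _)
  refine ⟨lam, by positivity, hlam_near.trans_lt hlam'1, fun x hxS => ?_⟩
  simp only [← dist_eq_norm] at hloc ⊢
  have hdist := dist_nonneg (x := x) (y := xstar)
  rcases lt_or_ge (dist x xstar) δ with hnear | hδx
  · exact (mul_le_mul_of_nonneg_right hlam_near hdist).trans (hloc x hxS hnear)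
  rcases le_or_gt (dist x xstar) (2 * R) with hmid | hfar
  · exact (mul_le_mul_of_nonneg_right hlam_mid hdist).trans
      (hc x ⟨⟨hxS, hmid⟩, by simpa using hδx⟩)
  · nlinarith [dist_sub_le_infDist_of_subset_closedBall hne hOR x]

/-- If the local bound `dist(x,O) ≥ λ̄‖x−x*‖` holds near `x*` on a closed set `S`
meeting the closure of the bounded set `O` only at `x*`, then a global constant `λ ∈ (0,1)`
works on all of `S`. -/
theorem stmt6 {n : ℕ} (S O : Set (EuclideanSpace ℝ (Fin n)))
    (xstar : EuclideanSpace ℝ (Fin n))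
    (hS : IsClosed S) (hne : O.Nonempty) (hbd : Bornology.IsBounded O)
    (hxS : xstar ∈ S) (hcap : S ∩ closure O = {xstar})
    (δ lam' : ℝ) (hδ : 0 < δ) (hlam'0 : 0 < lam') (hlam'1 : lam' < 1)
    (hloc : ∀ x ∈ S, ‖x - xstar‖ < δ → lam' * ‖x - xstar‖ ≤ Metric.infDist x O) :
    ∃ lam : ℝ, 0 < lam ∧ lam < 1 ∧
      ∀ x ∈ S, lam * ‖x - xstar‖ ≤ Metric.infDist x O :=
  stmt6_general S O xstar hS hne hbd hcap δ lam' hδ hlam'0 hlam'1 hloc
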